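/- Let $\Sigma, \widehat{\Sigma}$ be symmetric positive semidefinite $d\times d$ real matrices, let $\bar\lambda > 0$ satisfy $2\|\widehat{\Sigma} - \Sigma\|_\infty \leq \bar\lambda$, and let $\lambda > \bar\lambda$. Let $\widehat{\Sigma}^\lambda$ be obtained from $\widehat{\Sigma}$ by soft-thresholding its eigenvalues at level $\lambda/2$ (i.e., replacing each eigenvalue $s_k$ by $\max\{s_k - \lambda/2, 0\}$ in the spectral decomposition). Then $\mathrm{rank}(\Sigma; \lambda) \leq \mathrm{rank}(\widehat{\Sigma}^\lambda) \leq \mathrm{rank}(\Sigma; \tfrac{1}{2}(\lambda - \bar\lambda))$, where $\mathrm{rank}(A;\varepsilon)$ denotes the number of singular values of $A$ that are $\geq \varepsilon$. -/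

import Mathlib

open Matrix MeasureTheory Finset

/-- Singular values of a real matrix (as square roots of the eigenvalues of `Aᴴ * A`),
indexed by columns; not necessarily sorted. -/
noncomputable def sval {m q : ℕ} (A : Matrix (Fin m) (Fin q) ℝ) (k : Fin q) : ℝ :=
  Real.sqrt ((show (Aᵀ * A).IsHermitian by simpa using Matrix.isHermitian_conjTranspose_mul_self A).eigenvalues k)

/-- Nuclear (Schatten-1) norm: sum of singular values. -/
noncomputable def nucNorm {m q : ℕ} (A : Matrix (Fin m) (Fin q) ℝ) : ℝ :=
  ∑ k, sval A k

/-- Frobenius (Schatten-2) norm. -/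
noncomputable def frobNorm {m q : ℕ} (A : Matrix (Fin m) (Fin q) ℝ) : ℝ :=
  Real.sqrt (Matrix.trace (Aᴴ * A))

/-- Spectral norm: largest singular value. -/
noncomputable def specNorm {m q : ℕ} (A : Matrix (Fin m) (Fin q) ℝ) : ℝ :=
  ⨆ k, sval A k

/-- `rankAt A ε`: number of singular values of `A` that are `≥ ε`. -/
noncomputable def rankAt {m q : ℕ} (A : Matrix (Fin m) (Fin q) ℝ) (ε : ℝ) : ℕ :=
  Nat.card {k : Fin q // ε ≤ sval A k}

/-- `svalOrd A k`: the `(k+1)`-th largest singular value of `A`. -/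
noncomputable def svalOrd {m q : ℕ} (A : Matrix (Fin m) (Fin q) ℝ) (k : Fin q) : ℝ :=
  sSup {t : ℝ | (k : ℕ) + 1 ≤ rankAt A t}

/-!
Write `Σ = Vᵀ diag(σ) V` and `Σ̂ = Wᵀ diag(s) W` with `V`, `W` orthogonal. The core is a Weyl-type
counting inequality: if `xᵀ A x ≤ xᵀ B x + δ |x|²` for all `x`, then `A` has at most as many
eigenvalues `≥ c` as `B` has eigenvalues `≥ c - δ`. Otherwise the eigenvectors of `A` with
eigenvalue `≥ c` and those of `B` with eigenvalue `< c - δ` span more than `d` dimensions, so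
their spans share a vector `x ≠ 0`, for which `c |x|² ≤ xᵀ A x` and `xᵀ B x < (c - δ) |x|²`.
As `|xᵀ (Σ̂ - Σ) x| ≤ (λ̄/2) |x|²`, this gives `#{σ ≥ λ} ≤ #{s ≥ λ - λ̄/2} ≤ #{s > λ/2}` and
`#{s > λ/2} ≤ #{σ ≥ (λ - λ̄)/2}`. The middle count is the rank of `Σ̂^λ`, and the outer ones
are `rank(Σ; ·)`, because the singular values of a positive semidefinite matrix are its
eigenvalues.
-/

section WeightedSums

variable {n : Type*} [Fintype n] {p y : n → ℝ} {c : ℝ}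

theorem mul_sum_sq_le_sum_mul_sq (hy : ∀ k, p k < c → y k = 0) :
    c * ∑ k, y k ^ 2 ≤ ∑ k, p k * y k ^ 2 := by
  rw [Finset.mul_sum]
  refine Finset.sum_le_sum fun k _ => ?_
  by_cases hk : p k < c
  · simp [hy k hk]
  · exact mul_le_mul_of_nonneg_right (not_lt.mp hk) (sq_nonneg _)

theorem sum_mul_sq_lt_mul_sum_sq (hy : ∀ k, c ≤ p k → y k = 0) (hy0 : y ≠ 0) :
    ∑ k, p k * y k ^ 2 < c * ∑ k, y k ^ 2 := by
  rw [Finset.mul_sum]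
  obtain ⟨j, hj⟩ := Function.ne_iff.mp hy0
  have hpj : p j < c := lt_of_not_ge fun h => hj (hy j h)
  refine Finset.sum_lt_sum (fun k _ => ?_) ⟨j, Finset.mem_univ j, ?_⟩
  · by_cases hk : c ≤ p k
    · simp [hy k hk]
    · exact mul_le_mul_of_nonneg_right (not_le.mp hk).le (sq_nonneg _)
  · exact mul_lt_mul_of_pos_right hpj (sq_pos_of_ne_zero hj)

end WeightedSums

namespace Matrix

variable {m n : Type*}

theorem of_mul_transpose_of_eq_one [Fintype m] [DecidableEq n] {u : n → m → ℝ}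
    (hu : ∀ i j, u i ⬝ᵥ u j = if i = j then (1 : ℝ) else 0) : of u * (of u)ᵀ = 1 := by
  ext i j
  exact (hu i j).trans one_apply.symm

variable [Fintype n]

theorem exists_ne_zero_mulVec_eq_zero_of_card_lt [Fintype m] {K : Type*} [Field K]
    (M : Matrix m n K) (h : Fintype.card m < Fintype.card n) : ∃ x ≠ 0, M *ᵥ x = 0 := by
  have hker := LinearMap.ker_ne_bot_of_finrank_lt (f := M.mulVecLin) (by simpa using h)
  obtain ⟨x, hx, hx0⟩ := (Submodule.ne_bot_iff _).mp hker
  exact ⟨x, hx0, hx⟩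

theorem dotProduct_self_nonneg {R : Type*} [Ring R] [LinearOrder R] [IsStrictOrderedRing R]
    (v : n → R) : 0 ≤ v ⬝ᵥ v :=
  Finset.sum_nonneg fun i _ => mul_self_nonneg (v i)

variable [DecidableEq n]

theorem dotProduct_transpose_mul_diagonal_mul_mulVec [Fintype m] {R : Type*} [CommRing R]
    (W : Matrix n m R) (p : n → R) (x : m → R) :
    x ⬝ᵥ (Wᵀ * diagonal p * W) *ᵥ x = ∑ k, p k * (W *ᵥ x) k ^ 2 := by
  rw [← mulVec_mulVec, ← mulVec_mulVec, dotProduct_mulVec, vecMul_transpose, dotProduct]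
  simp only [mulVec_diagonal]
  exact Finset.sum_congr rfl fun k _ => by ring

theorem mulVec_dotProduct_mulVec_of_mul_transpose_eq_one {R : Type*} [CommRing R]
    {W : Matrix n n R} (hW : W * Wᵀ = 1) (x : n → R) :
    (W *ᵥ x) ⬝ᵥ (W *ᵥ x) = x ⬝ᵥ x := by
  rw [dotProduct_mulVec, ← vecMul_transpose, vecMul_vecMul, mul_eq_one_comm.mp hW, vecMul_one]

theorem sum_sq_mulVec_of_mul_transpose_eq_one {R : Type*} [CommRing R] {W : Matrix n n R}
    (hW : W * Wᵀ = 1) (x : n → R) : ∑ k, (W *ᵥ x) k ^ 2 = x ⬝ᵥ x := by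
  rw [← mulVec_dotProduct_mulVec_of_mul_transpose_eq_one hW x]
  simp only [dotProduct, sq]

theorem card_le_card_of_dotProduct_mulVec_le {W V : Matrix n n ℝ} (hW : W * Wᵀ = 1)
    (hV : V * Vᵀ = 1) {p q : n → ℝ} {δ : ℝ}
    (h : ∀ x, x ⬝ᵥ (Wᵀ * diagonal p * W) *ᵥ x ≤ x ⬝ᵥ (Vᵀ * diagonal q * V) *ᵥ x + δ * (x ⬝ᵥ x))
    (c : ℝ) : #{k | c ≤ p k} ≤ #{k | c - δ ≤ q k} := by
  by_contra! hlt
  -- `M *ᵥ x = 0` says that `x` is spanned both by the rows `W k` with `c ≤ p k`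
  -- and by the rows `V k` with `q k < c - δ`.
  let M : Matrix ({k // p k < c} ⊕ {k // c - δ ≤ q k}) n ℝ :=
    fromRows (W.submatrix Subtype.val id) (V.submatrix Subtype.val id)
  have hcard : Fintype.card ({k // p k < c} ⊕ {k // c - δ ≤ q k}) < Fintype.card n := by
    have := Finset.card_filter_add_card_filter_not (s := univ) (fun k => c ≤ p k)
    simp only [Fintype.card_sum, Fintype.card_subtype, not_le, card_univ] at this ⊢
    omega
  obtain ⟨x, hx0, hMx⟩ := exists_ne_zero_mulVec_eq_zero_of_card_lt M hcard
  have hWx : ∀ k, p k < c → (W *ᵥ x) k = 0 := fun k hk => congrFun hMx (Sum.inl ⟨k, hk⟩)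
  have hVx : ∀ k, c - δ ≤ q k → (V *ᵥ x) k = 0 := fun k hk => congrFun hMx (Sum.inr ⟨k, hk⟩)
  have hVx0 : V *ᵥ x ≠ 0 := fun h0 => hx0 <| by
    rw [← dotProduct_self_eq_zero, ← mulVec_dotProduct_mulVec_of_mul_transpose_eq_one hV, h0,
      dotProduct_zero]
  have hlow := mul_sum_sq_le_sum_mul_sq hWx
  have hup := sum_mul_sq_lt_mul_sum_sq hVx hVx0
  have hx := h x
  rw [sum_sq_mulVec_of_mul_transpose_eq_one hW] at hlow
  rw [sum_sq_mulVec_of_mul_transpose_eq_one hV] at hup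
  rw [dotProduct_transpose_mul_diagonal_mul_mulVec,
    dotProduct_transpose_mul_diagonal_mul_mulVec] at hx
  linarith

theorem IsHermitian.exists_eq_transpose_mul_diagonal_mul {A : Matrix n n ℝ}
    (hA : A.IsHermitian) :
    ∃ W : Matrix n n ℝ, W * Wᵀ = 1 ∧ A = Wᵀ * diagonal hA.eigenvalues * W := by
  refine ⟨star (hA.eigenvectorUnitary : Matrix n n ℝ), ?_, ?_⟩
  · simpa [star_eq_conjTranspose, conjTranspose_eq_transpose_of_trivial] using
      mem_unitaryGroup_iff'.mp hA.eigenvectorUnitary.2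
  · conv_lhs => rw [hA.spectral_theorem]
    simp [Unitary.conjStarAlgAut_apply, star_eq_conjTranspose,
      conjTranspose_eq_transpose_of_trivial]

theorem card_eq_card_of_transpose_mul_diagonal_mul_eq {W V : Matrix n n ℝ} (hW : W * Wᵀ = 1)
    (hV : V * Vᵀ = 1) {p q : n → ℝ} (h : Wᵀ * diagonal p * W = Vᵀ * diagonal q * V) (c : ℝ) :
    #{k | c ≤ p k} = #{k | c ≤ q k} := by
  have hpq := card_le_card_of_dotProduct_mulVec_le hW hV (p := p) (q := q) (δ := 0) (by simp [h]) c
  have hqp := card_le_card_of_dotProduct_mulVec_le hV hW (p := q) (q := p) (δ := 0) (by simp [h]) c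
  rw [sub_zero] at hpq hqp
  exact hpq.antisymm hqp

theorem rank_transpose_mul_diagonal_mul {W : Matrix n n ℝ} (hW : W * Wᵀ = 1) (p : n → ℝ) :
    (Wᵀ * diagonal p * W).rank = #{k | p k ≠ 0} := by
  rw [rank_mul_eq_left_of_isUnit_det _ _ (isUnit_det_of_right_inverse hW),
    rank_mul_eq_right_of_isUnit_det _ _ (isUnit_det_of_left_inverse hW), rank_diagonal,
    Fintype.card_subtype]

theorem sum_smul_vecMulVec_self_eq {R : Type*} [CommSemiring R] (u : n → m → R) (p : n → R) :
    ∑ k, p k • vecMulVec (u k) (u k) = (of u)ᵀ * diagonal p * of u := by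
  ext i j
  rw [mul_apply]
  simp only [mul_diagonal, sum_apply, smul_apply, vecMulVec_apply, transpose_apply, of_apply,
    smul_eq_mul]
  exact Finset.sum_congr rfl fun k _ => by ring

end Matrix

section SingularValues

variable {m q : ℕ}

theorem isHermitian_transpose_mul_self (A : Matrix (Fin m) (Fin q) ℝ) :
    (Aᵀ * A).IsHermitian := by
  simpa using isHermitian_conjTranspose_mul_self A

theorem sval_eq_sqrt (A : Matrix (Fin m) (Fin q) ℝ) (k : Fin q) :
    sval A k = √((isHermitian_transpose_mul_self A).eigenvalues k) :=
  rfl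

theorem eigenvalues_transpose_mul_self_nonneg (A : Matrix (Fin m) (Fin q) ℝ) (k : Fin q) :
    0 ≤ (isHermitian_transpose_mul_self A).eigenvalues k :=
  (posSemidef_conjTranspose_mul_self A).eigenvalues_nonneg k

theorem sval_le_specNorm (A : Matrix (Fin m) (Fin q) ℝ) (k : Fin q) : sval A k ≤ specNorm A :=
  le_ciSup (Set.finite_range _).bddAbove k

theorem specNorm_nonneg (A : Matrix (Fin m) (Fin q) ℝ) : 0 ≤ specNorm A :=
  Real.iSup_nonneg fun _ => Real.sqrt_nonneg _

theorem mulVec_dotProduct_mulVec_le_specNorm_sq (A : Matrix (Fin m) (Fin q) ℝ)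
    (x : Fin q → ℝ) : (A *ᵥ x) ⬝ᵥ (A *ᵥ x) ≤ specNorm A ^ 2 * (x ⬝ᵥ x) := by
  have hH := isHermitian_transpose_mul_self A
  obtain ⟨W, hW, hAA⟩ := hH.exists_eq_transpose_mul_diagonal_mul
  have heig : ∀ k, hH.eigenvalues k ≤ specNorm A ^ 2 := fun k => by
    rw [← Real.sq_sqrt (eigenvalues_transpose_mul_self_nonneg A k), ← sval_eq_sqrt]
    exact pow_le_pow_left₀ (Real.sqrt_nonneg _) (sval_le_specNorm A k) 2
  calc (A *ᵥ x) ⬝ᵥ (A *ᵥ x) = x ⬝ᵥ (Aᵀ * A) *ᵥ x := by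
        rw [← mulVec_mulVec, dotProduct_mulVec x, vecMul_transpose]
    _ = ∑ k, hH.eigenvalues k * (W *ᵥ x) k ^ 2 := by
        conv_lhs => rw [hAA]
        rw [dotProduct_transpose_mul_diagonal_mul_mulVec]
    _ ≤ ∑ k, specNorm A ^ 2 * (W *ᵥ x) k ^ 2 :=
        Finset.sum_le_sum fun k _ => mul_le_mul_of_nonneg_right (heig k) (sq_nonneg _)
    _ = specNorm A ^ 2 * (x ⬝ᵥ x) := by
        rw [← Finset.mul_sum, sum_sq_mulVec_of_mul_transpose_eq_one hW]

theorem abs_dotProduct_mulVec_le_specNorm_mul (A : Matrix (Fin q) (Fin q) ℝ) (x : Fin q → ℝ) :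
    |x ⬝ᵥ A *ᵥ x| ≤ specNorm A * (x ⬝ᵥ x) := by
  have hxx := dotProduct_self_nonneg x
  have hcs : (x ⬝ᵥ A *ᵥ x) ^ 2 ≤ (x ⬝ᵥ x) * ((A *ᵥ x) ⬝ᵥ (A *ᵥ x)) := by
    simpa only [dotProduct, sq] using Finset.sum_mul_sq_le_sq_mul_sq univ x (A *ᵥ x)
  refine abs_le_of_sq_le_sq ?_ (mul_nonneg (specNorm_nonneg A) hxx)
  calc (x ⬝ᵥ A *ᵥ x) ^ 2 ≤ (x ⬝ᵥ x) * ((A *ᵥ x) ⬝ᵥ (A *ᵥ x)) := hcs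
    _ ≤ (x ⬝ᵥ x) * (specNorm A ^ 2 * (x ⬝ᵥ x)) :=
        mul_le_mul_of_nonneg_left (mulVec_dotProduct_mulVec_le_specNorm_sq A x) hxx
    _ = (specNorm A * (x ⬝ᵥ x)) ^ 2 := by ring

theorem rankAt_eq_card_eigenvalues_ge {S : Matrix (Fin q) (Fin q) ℝ} (hS : S.PosSemidef) {ε : ℝ}
    (hε : 0 ≤ ε) : rankAt S ε = #{k | ε ≤ hS.isHermitian.eigenvalues k} := by
  obtain ⟨W, hW, hSS⟩ := (isHermitian_transpose_mul_self S).exists_eq_transpose_mul_diagonal_mul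
  obtain ⟨V, hV, hSV⟩ := hS.isHermitian.exists_eq_transpose_mul_diagonal_mul
  set σ := hS.isHermitian.eigenvalues
  have hsq : Sᵀ * S = Vᵀ * diagonal (fun k => σ k ^ 2) * V := by
    have hST : Sᵀ = S := by simpa using hS.isHermitian.eq
    rw [hST, hSV]
    simp only [Matrix.mul_assoc]
    rw [← Matrix.mul_assoc V, hV, Matrix.one_mul, ← Matrix.mul_assoc (diagonal σ),
      diagonal_mul_diagonal]
    simp only [sq]
  calc rankAt S ε = #{k | ε ^ 2 ≤ (isHermitian_transpose_mul_self S).eigenvalues k} := by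
        simp only [rankAt, sval_eq_sqrt, Nat.card_eq_fintype_card, Fintype.card_subtype,
          Real.le_sqrt hε (eigenvalues_transpose_mul_self_nonneg S _)]
    _ = #{k | ε ^ 2 ≤ σ k ^ 2} :=
        card_eq_card_of_transpose_mul_diagonal_mul_eq hW hV (hSS.symm.trans hsq) _
    _ = #{k | ε ≤ σ k} := by
        rw [Finset.filter_congr fun k _ => sq_le_sq₀ hε (hS.eigenvalues_nonneg k)]

end SingularValues

theorem rank_sandwich_general {d : ℕ}
    (Sig Shat : Matrix (Fin d) (Fin d) ℝ)
    (hSig : Sig.PosSemidef)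
    (s : Fin d → ℝ) (u : Fin d → (Fin d → ℝ))
    (hu : ∀ i j, u i ⬝ᵥ u j = if i = j then (1 : ℝ) else 0)
    (hShat : Shat = ∑ k, s k • Matrix.vecMulVec (u k) (u k))
    (lbar lam : ℝ) (hlbar : 0 < lbar)
    (hclose : 2 * specNorm (Shat - Sig) ≤ lbar) (hll : lbar < lam)
    (Slam : Matrix (Fin d) (Fin d) ℝ)
    (hSlam : Slam = ∑ k, max (s k - lam / 2) 0 • Matrix.vecMulVec (u k) (u k)) :
    rankAt Sig lam ≤ Slam.rank ∧ Slam.rank ≤ rankAt Sig ((lam - lbar) / 2) := by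
  obtain ⟨V, hV, hSigV⟩ := hSig.isHermitian.exists_eq_transpose_mul_diagonal_mul
  have hW := of_mul_transpose_of_eq_one hu
  rw [sum_smul_vecMulVec_self_eq] at hShat hSlam
  have hquad (x : Fin d → ℝ) : |x ⬝ᵥ Shat *ᵥ x - x ⬝ᵥ Sig *ᵥ x| ≤ lbar / 2 * (x ⬝ᵥ x) := by
    rw [← dotProduct_sub, ← sub_mulVec]
    exact (abs_dotProduct_mulVec_le_specNorm_mul _ x).trans <|
      mul_le_mul_of_nonneg_right (by linarith) (dotProduct_self_nonneg x)
  have hrank : Slam.rank = #{k | lam / 2 < s k} := by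
    simp only [hSlam, rank_transpose_mul_diagonal_mul hW, ne_eq, max_eq_right_iff, not_le,
      sub_pos]
  constructor
  · calc rankAt Sig lam = #{k | lam ≤ hSig.isHermitian.eigenvalues k} :=
          rankAt_eq_card_eigenvalues_ge hSig (by linarith)
      _ ≤ #{k | lam - lbar / 2 ≤ s k} := card_le_card_of_dotProduct_mulVec_le hV hW
          (fun x => by rw [← hSigV, ← hShat]; linarith [(abs_le.mp (hquad x)).1]) lam
      _ ≤ #{k | lam / 2 < s k} :=
          card_le_card (monotone_filter_right _ fun k _ hk => by linarith)
      _ = Slam.rank := hrank.symm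
  · calc Slam.rank = #{k | lam / 2 < s k} := hrank
      _ ≤ #{k | lam / 2 ≤ s k} := card_le_card (monotone_filter_right _ fun k _ hk => hk.le)
      _ ≤ #{k | lam / 2 - lbar / 2 ≤ hSig.isHermitian.eigenvalues k} :=
          card_le_card_of_dotProduct_mulVec_le hW hV
            (fun x => by rw [← hSigV, ← hShat]; linarith [(abs_le.mp (hquad x)).2]) _
      _ = rankAt Sig ((lam - lbar) / 2) := by
          rw [rankAt_eq_card_eigenvalues_ge hSig (by linarith), sub_div]

/-- Sandwich bound on the rank of the soft-thresholded estimator. -/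
theorem rank_sandwich {d : ℕ}
    (Sig Shat : Matrix (Fin d) (Fin d) ℝ)
    (hSig : Sig.PosSemidef) (hShatP : Shat.PosSemidef)
    (s : Fin d → ℝ) (u : Fin d → (Fin d → ℝ)) (hs : ∀ k, 0 ≤ s k)
    (hu : ∀ i j, u i ⬝ᵥ u j = if i = j then (1 : ℝ) else 0)
    (hShat : Shat = ∑ k, s k • Matrix.vecMulVec (u k) (u k))
    (lbar lam : ℝ) (hlbar : 0 < lbar)
    (hclose : 2 * specNorm (Shat - Sig) ≤ lbar) (hll : lbar < lam)
    (Slam : Matrix (Fin d) (Fin d) ℝ)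
    (hSlam : Slam = ∑ k, max (s k - lam / 2) 0 • Matrix.vecMulVec (u k) (u k)) :
    rankAt Sig lam ≤ Slam.rank ∧ Slam.rank ≤ rankAt Sig ((lam - lbar) / 2) :=
  rank_sandwich_general Sig Shat hSig s u hu hShat lbar lam hlbar hclose hll Slam hSlam
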